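/- arXiv:2408.01864 — 2 statements merged into one kernel-verified Lean document; each statement's English description precedes it below -/
import Mathlib

section
/- For every integer r ≥ 0, the set of points X with d_pc(O,X) = r lying on the line y = x + r and outside the first quadrant is exactly {(x, x+r) : x ∈ ℤ, x < 0, x + r ≥ 0} ∖ {(0,r)}, i.e., {(x,x+r) : -r ≤ x ≤ -1}. -/
def Lp : ℤ × ℤ → ℤ × ℤ := fun p => (-p.1 + 2*p.2 + 1, p.2)
def Lpp : ℤ × ℤ → ℤ × ℤ := fun p => (p.1, 2*p.1 - p.2 + 1)
def Mr : ℤ × ℤ → ℤ × ℤ := fun p => (p.1 + 1, p.2)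
def Ml : ℤ × ℤ → ℤ × ℤ := fun p => (p.1 - 1, p.2)
def Mu : ℤ × ℤ → ℤ × ℤ := fun p => (p.1, p.2 + 1)
def Md : ℤ × ℤ → ℤ × ℤ := fun p => (p.1, p.2 - 1)

def ops : Set ((ℤ × ℤ) → (ℤ × ℤ)) := {Lp, Lpp, Mr, Ml, Mu, Md}

/-- The parabolic-taxicab distance: minimal number of operators from `ops`
needed to map `P` to `Q`. -/
noncomputable def dpc (P Q : ℤ × ℤ) : ℕ :=
  sInf {n | ∃ l : List ((ℤ × ℤ) → (ℤ × ℤ)), l.length = n ∧ (∀ f ∈ l, f ∈ ops) ∧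
    l.foldr (fun f p => f p) P = Q}

/-!
The quantity `potential X = |y - x| + [x < 0 ∧ y < 0]` grows by at most one under each
operator, so it bounds `dpc O X` from below. Conversely, the unit steps reach `X` from `O` in
`|x| + |y|` moves. On the line `y = x + r` with `x < 0 ≤ y` both bounds equal `r`, while a point
of that line with `x, y < 0` has potential `r + 1 > r`, and a point with `x, y ≥ 0` lies in the
first quadrant.
-/

def potential (X : ℤ × ℤ) : ℕ :=
  (X.2 - X.1).natAbs + if X.1 < 0 ∧ X.2 < 0 then 1 else 0

lemma potential_apply_le {f : ℤ × ℤ → ℤ × ℤ} (hf : f ∈ ops) (P : ℤ × ℤ) :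
    potential (f P) ≤ potential P + 1 := by
  simp only [ops, Set.mem_insert_iff, Set.mem_singleton_iff] at hf
  rcases hf with rfl | rfl | rfl | rfl | rfl | rfl <;> unfold potential <;> split_ifs <;>
    simp only [Lp, Lpp, Mr, Ml, Mu, Md] at * <;> omega

lemma potential_foldr_le (l : List ((ℤ × ℤ) → (ℤ × ℤ))) (hl : ∀ f ∈ l, f ∈ ops)
    (P : ℤ × ℤ) : potential (l.foldr (fun f p => f p) P) ≤ potential P + l.length := by
  induction l with
  | nil => simp
  | cons f l ih =>
    have hf := potential_apply_le (hl f List.mem_cons_self) (l.foldr (fun f p => f p) P)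
    have hl' := ih fun g hg => hl g (List.mem_cons_of_mem f hg)
    rw [List.foldr_cons, List.length_cons]
    omega

lemma foldr_replicate_of_translation {f : ℤ × ℤ → ℤ × ℤ} {v : ℤ × ℤ} (hf : ∀ p, f p = p + v)
    (k : ℕ) (P : ℤ × ℤ) : (List.replicate k f).foldr (fun f p => f p) P = P + k • v := by
  induction k with
  | zero => simp
  | succ k ih => rw [List.replicate_succ, List.foldr_cons, ih, hf, succ_nsmul, add_assoc]

lemma exists_ops_list_translation {f g : ℤ × ℤ → ℤ × ℤ} (hf : f ∈ ops) (hg : g ∈ ops)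
    {v : ℤ × ℤ} (hfv : ∀ p, f p = p + v) (hgv : ∀ p, g p = p - v) (a : ℤ) :
    ∃ l : List ((ℤ × ℤ) → (ℤ × ℤ)), l.length = a.natAbs ∧ (∀ h ∈ l, h ∈ ops) ∧
      ∀ P, l.foldr (fun f p => f p) P = P + a • v := by
  obtain ⟨k, rfl | rfl⟩ := Int.eq_nat_or_neg a
  · refine ⟨List.replicate k f, by simp, fun h hh => List.eq_of_mem_replicate hh ▸ hf, ?_⟩
    intro P
    rw [foldr_replicate_of_translation hfv, natCast_zsmul]
  · refine ⟨List.replicate k g, by simp, fun h hh => List.eq_of_mem_replicate hh ▸ hg, ?_⟩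
    intro P
    have hgv' : ∀ p, g p = p + -v := fun p => (hgv p).trans (sub_eq_add_neg p v)
    rw [foldr_replicate_of_translation hgv', neg_zsmul, natCast_zsmul, smul_neg]

lemma exists_ops_list_taxicab (P Q : ℤ × ℤ) :
    ∃ l : List ((ℤ × ℤ) → (ℤ × ℤ)),
      l.length = (Q.1 - P.1).natAbs + (Q.2 - P.2).natAbs ∧ (∀ f ∈ l, f ∈ ops) ∧
        l.foldr (fun f p => f p) P = Q := by
  obtain ⟨horiz, hlen₁, hops₁, hfold₁⟩ := exists_ops_list_translation
    (f := Mr) (g := Ml) (v := (1, 0))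
    (by simp [ops]) (by simp [ops]) (fun _ => by ext <;> simp [Mr])
    (fun _ => by ext <;> simp [Ml]) (Q.1 - P.1)
  obtain ⟨vert, hlen₂, hops₂, hfold₂⟩ := exists_ops_list_translation
    (f := Mu) (g := Md) (v := (0, 1))
    (by simp [ops]) (by simp [ops]) (fun _ => by ext <;> simp [Mu])
    (fun _ => by ext <;> simp [Md]) (Q.2 - P.2)
  refine ⟨horiz ++ vert, by rw [List.length_append, hlen₁, hlen₂], ?_, ?_⟩
  · simpa only [List.mem_append, or_imp, forall_and] using ⟨hops₁, hops₂⟩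
  · rw [List.foldr_append, hfold₂, hfold₁]
    ext <;> simp

lemma dpc_le_taxicab (P Q : ℤ × ℤ) : dpc P Q ≤ (Q.1 - P.1).natAbs + (Q.2 - P.2).natAbs := by
  obtain ⟨l, hlen, hl, hPQ⟩ := exists_ops_list_taxicab P Q
  exact hlen ▸ Nat.sInf_le ⟨l, rfl, hl, hPQ⟩

lemma exists_ops_list_length_dpc (P Q : ℤ × ℤ) :
    ∃ l : List ((ℤ × ℤ) → (ℤ × ℤ)), l.length = dpc P Q ∧ (∀ f ∈ l, f ∈ ops) ∧
      l.foldr (fun f p => f p) P = Q := by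
  obtain ⟨l, -, hl, hPQ⟩ := exists_ops_list_taxicab P Q
  exact Nat.sInf_mem (s := {n | ∃ l : List ((ℤ × ℤ) → (ℤ × ℤ)), l.length = n ∧
    (∀ f ∈ l, f ∈ ops) ∧ l.foldr (fun f p => f p) P = Q}) ⟨l.length, l, rfl, hl, hPQ⟩

lemma potential_le_add_dpc (P Q : ℤ × ℤ) : potential Q ≤ potential P + dpc P Q := by
  obtain ⟨l, hlen, hl, rfl⟩ := exists_ops_list_length_dpc P Q
  exact hlen ▸ potential_foldr_le l hl P

theorem boundary_on_top_line_outside_first_quadrant (r : ℕ) :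
    {X : ℤ × ℤ | dpc (0, 0) X = r ∧ X.2 = X.1 + (r : ℤ) ∧ ¬(0 ≤ X.1 ∧ 0 ≤ X.2)} =
      {X : ℤ × ℤ | ∃ x : ℤ, -(r : ℤ) ≤ x ∧ x ≤ -1 ∧ X = (x, x + (r : ℤ))} := by
  ext ⟨x, y⟩
  have hlower := potential_le_add_dpc (0, 0) (x, y)
  have hupper := dpc_le_taxicab (0, 0) (x, y)
  simp only [potential, sub_zero] at hlower hupper
  simp only [Set.mem_ofPred_eq, Prod.mk.injEq]
  constructor
  · rintro ⟨hdpc, rfl, hquadrant⟩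
    refine ⟨x, ?_, ?_, rfl, rfl⟩ <;> split_ifs at hlower <;> omega
  · rintro ⟨x, hleft, hright, rfl, rfl⟩
    refine ⟨?_, rfl, by omega⟩
    split_ifs at hlower <;> omega
end

section
/- Let r ≥ 2 and c be integers with the same parity, -r+2 ≤ c ≤ 0, and write |c| = r - 2k. The set of negative integers x such that d_pc(O,(x,x+c)) = r equals the translated interval ([k-r,-1] ∩ ℤ) + c(k-1) - k(k-1)/2 if k is odd, and ([0,r-k-1] ∩ ℤ) + ck - (k+1)k/2 if k is even. -/
/-! Offsetting a point from the diagonal by `|c|` costs `|c|` steps, and every further pair of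
steps can push the point `(x, x + c)`, `x ≤ 0`, further down its line: with `|c| + 2j` steps one
reaches exactly the points with `-2x ≤ 2j|c| + j(j+1)`. These points are built by induction on `j`:
a path to a point of a line with smaller offset, the coordinate swap (which conjugates `L'` to
`L''`), one `L''` step and some unit steps. Conversely, a parity condition, `|x - y| ≤ n` and a
quadratic lower bound on `max x y` are preserved by every operator. Hence
`d_pc(O, (x, x + c)) = |c| + 2k` exactly when `2(k-1)|c| + (k-1)k < -2x ≤ 2k|c| + k(k+1)`;
for either parity of `k` the two formulas of the statement describe this interval. -/

def ReachableIn (n : ℕ) (P Q : ℤ × ℤ) : Prop :=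
  ∃ l : List ((ℤ × ℤ) → (ℤ × ℤ)), l.length = n ∧ (∀ f ∈ l, f ∈ ops) ∧
    l.foldr (fun f p => f p) P = Q

theorem swap_comp_comp_swap_mem_ops {f : ℤ × ℤ → ℤ × ℤ} (hf : f ∈ ops) :
    Prod.swap ∘ f ∘ Prod.swap ∈ ops := by
  have conj : Prod.swap ∘ Lp ∘ Prod.swap = Lpp := by
    funext p
    simp only [Function.comp_apply, Lp, Lpp, Prod.fst_swap, Prod.snd_swap, Prod.swap_prod_mk]
    ring_nf
  simp only [ops, Set.mem_insert_iff, Set.mem_singleton_iff] at hf ⊢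
  rcases hf with rfl | rfl | rfl | rfl | rfl | rfl
  · exact Or.inr (Or.inl conj)
  · exact Or.inl (by rw [← conj]; rfl)
  · exact Or.inr (Or.inr (Or.inr (Or.inr (Or.inl rfl))))
  · exact Or.inr (Or.inr (Or.inr (Or.inr (Or.inr rfl))))
  · exact Or.inr (Or.inr (Or.inl rfl))
  · exact Or.inr (Or.inr (Or.inr (Or.inl rfl)))

namespace ReachableIn

theorem refl (P : ℤ × ℤ) : ReachableIn 0 P P := ⟨[], rfl, by simp, rfl⟩

theorem step {n : ℕ} {P Q : ℤ × ℤ} {f : ℤ × ℤ → ℤ × ℤ} (h : ReachableIn n P Q) (hf : f ∈ ops) :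
    ReachableIn (n + 1) P (f Q) := by
  obtain ⟨l, rfl, hl, rfl⟩ := h
  exact ⟨f :: l, rfl, List.forall_mem_cons.2 ⟨hf, hl⟩, rfl⟩

theorem induction_on {P : ℤ × ℤ} {motive : ℕ → ℤ × ℤ → Prop} (zero : motive 0 P)
    (step : ∀ n Q f, f ∈ ops → motive n Q → motive (n + 1) (f Q))
    {n : ℕ} {Q : ℤ × ℤ} (h : ReachableIn n P Q) : motive n Q := by
  obtain ⟨l, rfl, hl, rfl⟩ := h
  induction l with
  | nil => exact zero
  | cons f l ih =>
    rw [List.forall_mem_cons] at hl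
    exact step _ _ f hl.1 (ih hl.2)

theorem swap {n : ℕ} {P Q : ℤ × ℤ} (h : ReachableIn n P Q) : ReachableIn n P.swap Q.swap :=
  h.induction_on (motive := fun n Q => ReachableIn n P.swap Q.swap) (refl _)
    fun _ _ _ hf ih => ih.step (swap_comp_comp_swap_mem_ops hf)

theorem down {n : ℕ} {P : ℤ × ℤ} {x y : ℤ} (h : ReachableIn n P (x, y)) (t : ℕ) :
    ReachableIn (n + t) P (x, y - t) := by
  induction t with
  | zero => simpa using h
  | succ t ih =>
    have := ih.step (f := Md) (by simp [ops])
    simp only [Md] at this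
    push_cast
    rwa [← add_assoc, sub_add_eq_sub_sub]

end ReachableIn

theorem dpc_le_of_reachableIn {n : ℕ} {P Q : ℤ × ℤ} (h : ReachableIn n P Q) : dpc P Q ≤ n :=
  Nat.sInf_le h

theorem reachableIn_dpc {n : ℕ} {P Q : ℤ × ℤ} (h : ReachableIn n P Q) :
    ReachableIn (dpc P Q) P Q :=
  Nat.sInf_mem (s := {n | ReachableIn n P Q}) ⟨n, h⟩

theorem reachableIn_diag (j s a : ℕ) (h : 2 * a ≤ 2 * j * s + j * (j + 1)) :
    ReachableIn (s + 2 * j) (0, 0) (-a, -a - s) := by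
  induction j generalizing s a with
  | zero =>
    obtain rfl : a = 0 := by omega
    simpa using (ReachableIn.refl ((0 : ℤ), (0 : ℤ))).down s
  | succ j ih =>
    rcases le_or_gt a (s + 1) with ha | ha
    · -- from `(-a, 0)`, one `L''` step and `s + 1 - a` steps down
      have := ((ih a 0 (by positivity)).swap.step (f := Lpp) (by simp [ops])).down (s + 1 - a)
      simp only [Prod.swap_prod_mk] at this
      convert this using 1
      · omega
      · push_cast [Nat.cast_sub ha]
        ext <;> ring
    · -- from `(-a, s + 1 - a)`, one `L''` step
      obtain ⟨b, rfl⟩ : ∃ b, a = b + (s + 1) := ⟨a - (s + 1), by omega⟩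
      have := (ih (s + 1) b (by linarith)).swap.step (f := Lpp) (by simp [ops])
      simp only [Prod.swap_prod_mk, Lpp] at this
      convert this using 1
      · ring
      · push_cast
        ext <;> ring

theorem exists_reachableIn_diag {x c j : ℤ} (hx : x ≤ 0) (hc : c ≤ 0) (hj : 0 ≤ j)
    (h : -2 * x ≤ 2 * j * (-c) + j * (j + 1)) :
    ∃ n : ℕ, (n : ℤ) = -c + 2 * j ∧ ReachableIn n (0, 0) (x, x + c) := by
  obtain ⟨a, rfl⟩ : ∃ a : ℕ, x = -a := ⟨(-x).toNat, by omega⟩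
  obtain ⟨s, rfl⟩ : ∃ s : ℕ, c = -s := ⟨(-c).toNat, by omega⟩
  lift j to ℕ using hj
  refine ⟨s + 2 * j, by push_cast; ring, ?_⟩
  have hnat : 2 * a ≤ 2 * j * s + j * (j + 1) := by
    zify
    linarith
  simpa [sub_eq_add_neg] using reachableIn_diag j s a hnat

/-- For `y ≤ x` and `n = (x - y) + 2m`, the bound reads `-x ≤ m(x - y) + m(m+1)/2`. -/
def Admissible (n x y : ℤ) : Prop :=
  2 ∣ x + y + n ∧ x - y ≤ n ∧ y - x ≤ n ∧
  (y ≤ x → -8 * x ≤ (n - (x - y)) * (n + 3 * (x - y) + 2)) ∧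
  (x ≤ y → -8 * y ≤ (n - (y - x)) * (n + 3 * (y - x) + 2))

namespace Admissible

variable {n x y : ℤ}

theorem swap (h : Admissible n x y) : Admissible n y x := by
  obtain ⟨h1, h2, h3, h4, h5⟩ := h
  exact ⟨by omega, h3, h2, h5, h4⟩

theorem mr (h : Admissible n x y) : Admissible (n + 1) (x + 1) y := by
  obtain ⟨h1, h2, h3, h4, h5⟩ := h
  refine ⟨by omega, by omega, by omega, fun hyx => ?_, fun hxy => ?_⟩
  · rcases le_total y x with h0 | h0
    · nlinarith [h4 h0]
    · nlinarith [h5 h0]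
  · nlinarith [h5 (by omega)]

theorem ml (h : Admissible n x y) : Admissible (n + 1) (x - 1) y := by
  obtain ⟨h1, h2, h3, h4, h5⟩ := h
  refine ⟨by omega, by omega, by omega, fun hyx => ?_, fun hxy => ?_⟩
  · nlinarith [h4 (by omega)]
  · rcases le_total y x with h0 | h0
    · nlinarith [h4 h0]
    · nlinarith [h5 h0]

theorem lp (h : Admissible n x y) : Admissible (n + 1) (-x + 2 * y + 1) y := by
  obtain ⟨h1, h2, h3, h4, h5⟩ := h
  refine ⟨by omega, by omega, by omega, fun hyx => ?_, fun hxy => ?_⟩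
  · rcases le_total y x with h0 | h0
    · nlinarith [h4 h0]
    · nlinarith [h5 h0]
  · nlinarith [h4 (by omega)]

theorem step (h : Admissible n x y) {f : ℤ × ℤ → ℤ × ℤ} (hf : f ∈ ops) :
    Admissible (n + 1) (f (x, y)).1 (f (x, y)).2 := by
  simp only [ops, Set.mem_insert_iff, Set.mem_singleton_iff] at hf
  rcases hf with rfl | rfl | rfl | rfl | rfl | rfl
  · exact h.lp
  · simpa [Lpp, sub_eq_add_neg, add_comm] using h.swap.lp.swap
  · exact h.mr
  · exact h.ml
  · exact h.swap.mr.swap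
  · exact h.swap.ml.swap

end Admissible

theorem admissible_of_reachableIn {n : ℕ} {Q : ℤ × ℤ} (h : ReachableIn n (0, 0) Q) :
    Admissible n Q.1 Q.2 := by
  refine h.induction_on (motive := fun n Q => Admissible n Q.1 Q.2) (by simp [Admissible]) ?_
  intro n Q f hf ih
  simpa using ih.step hf

theorem admissible_dpc_diag {x c : ℤ} (hx : x ≤ 0) (hc : c ≤ 0) :
    Admissible (dpc (0, 0) (x, x + c)) x (x + c) := by
  obtain ⟨_, -, h⟩ := exists_reachableIn_diag hx hc (by omega : 0 ≤ -x + 1) (by nlinarith)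
  exact admissible_of_reachableIn (reachableIn_dpc h)

theorem dpc_diag_le_iff {x c j : ℤ} (hx : x ≤ 0) (hc : c ≤ 0) (hj : 0 ≤ j) :
    (dpc (0, 0) (x, x + c) : ℤ) ≤ -c + 2 * j ↔ -2 * x ≤ 2 * j * (-c) + j * (j + 1) := by
  constructor
  · -- `(N + c) * (N - 3 * c + 2)` is increasing in `N ≥ -c`
    intro hN
    obtain ⟨-, hoff, -, hbound, -⟩ := admissible_dpc_diag hx hc
    have hbound := hbound (by omega)
    rw [show x - (x + c) = -c by ring] at hoff hbound
    nlinarith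
  · intro h
    obtain ⟨n, hn, hreach⟩ := exists_reachableIn_diag hx hc hj h
    exact hn ▸ Int.ofNat_le.2 (dpc_le_of_reachableIn hreach)

theorem dpc_diag_eq_iff {x c k : ℤ} (hx : x ≤ 0) (hc : c ≤ 0) (hk : 1 ≤ k) :
    (dpc (0, 0) (x, x + c) : ℤ) = -c + 2 * k ↔
      2 * (k - 1) * (-c) + (k - 1) * k < -2 * x ∧ -2 * x ≤ 2 * k * (-c) + k * (k + 1) := by
  have hle := dpc_diag_le_iff hx hc (by omega : 0 ≤ k)
  have hlt := dpc_diag_le_iff hx hc (by omega : 0 ≤ k - 1)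
  rw [sub_add_cancel] at hlt
  rw [← hle, ← not_le, ← hlt]
  have hparity := (admissible_dpc_diag hx hc).1
  omega

theorem setOf_neg_dpc_diag_eq {c k : ℤ} (hc : c ≤ 0) (hk : 1 ≤ k) :
    {x : ℤ | x < 0 ∧ (dpc (0, 0) (x, x + c) : ℤ) = -c + 2 * k} =
      Set.Icc (c * k - k * (k - 1) / 2 - k) (c * k - c - k * (k - 1) / 2 - 1) := by
  obtain ⟨m, hm⟩ := Int.even_mul_pred_self k
  have hdiv : k * (k - 1) / 2 = m := by omega
  have hm0 : 0 ≤ m := by nlinarith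
  ext x
  simp only [Set.mem_ofPred_eq, Set.mem_Icc, hdiv]
  constructor
  · rintro ⟨hx, hd⟩
    rw [dpc_diag_eq_iff hx.le hc hk] at hd
    constructor <;> nlinarith
  · rintro ⟨h1, h2⟩
    have hx : x < 0 := by nlinarith
    rw [dpc_diag_eq_iff hx.le hc hk]
    exact ⟨hx, by nlinarith, by nlinarith⟩

theorem neg_part_of_boundary_lines_nonpos_c_general (r c k : ℤ)
    (hc0 : c ≤ 0) (hcl : -r + 2 ≤ c) (hk : |c| = r - 2 * k) :
    (Odd k →
      {x : ℤ | x < 0 ∧ (dpc (0, 0) (x, x + c) : ℤ) = r} =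
        (fun x => x + (c * (k - 1) - k * (k - 1) / 2)) '' Set.Icc (k - r) (-1)) ∧
    (Even k →
      {x : ℤ | x < 0 ∧ (dpc (0, 0) (x, x + c) : ℤ) = r} =
        (fun x => x + (c * k - (k + 1) * k / 2)) '' Set.Icc 0 (r - k - 1)) := by
  have hr : r = -c + 2 * k := by rw [abs_of_nonpos hc0] at hk; omega
  have hk1 : 1 ≤ k := by omega
  subst hr
  have hdiv : (k + 1) * k / 2 = k * (k - 1) / 2 + k := by
    rw [show (k + 1) * k = k * (k - 1) + 2 * k by ring, Int.add_mul_ediv_left _ _ two_ne_zero]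
  constructor
  · intro _
    rw [setOf_neg_dpc_diag_eq hc0 hk1, Set.image_add_const_Icc]
    congr 1 <;> ring
  · intro _
    rw [setOf_neg_dpc_diag_eq hc0 hk1, Set.image_add_const_Icc, hdiv]
    congr 1 <;> ring

theorem neg_part_of_boundary_lines_nonpos_c (r c k : ℤ) (hr : 2 ≤ r)
    (hpar : c % 2 = r % 2) (hc0 : c ≤ 0) (hcl : -r + 2 ≤ c) (hk : |c| = r - 2 * k) :
    (Odd k →
      {x : ℤ | x < 0 ∧ (dpc (0, 0) (x, x + c) : ℤ) = r} =
        (fun x => x + (c * (k - 1) - k * (k - 1) / 2)) '' Set.Icc (k - r) (-1)) ∧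
    (Even k →
      {x : ℤ | x < 0 ∧ (dpc (0, 0) (x, x + c) : ℤ) = r} =
        (fun x => x + (c * k - (k + 1) * k / 2)) '' Set.Icc 0 (r - k - 1)) :=
  neg_part_of_boundary_lines_nonpos_c_general r c k hc0 hcl hk
end
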